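/- Let d ≥ 1 and let B : ℝ^d → ℝ^{d×d} be continuous and antisymmetric (B_{lj} = −B_{jl}). Fix x ∈ ℝ^d and ε ≠ 0, and let A^x be the transversal gauge vector potential centered at x, A^x_l(w) := −Σ_{j=1}^d ∫_0^1 B_{lj}(x + s(w−x)) · s · (w_j − x_j) ds. Let a := x − (ε/2)(y+z), b := x + (ε/2)(y−z), c := x + (ε/2)(y+z). Then for all y, z ∈ ℝ^d the scaled magnetic flux through the triangle with vertices a, b, c equals (1/ε)( Γ^{A^x}([a,b]) + Γ^{A^x}([b,c]) + Γ^{A^x}([c,a]) ) = ε Σ_{l,j=1}^d B̃^ε_{lj}(x,y,z) y_l z_j = γ^B_ε(x,y,z). -/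

import Mathlib

noncomputable section
open MeasureTheory Complex

/-- `ℝ^d` -/
abbrev Vd (d : ℕ) := Fin d → ℝ

/-- Circulation `Γ^A([u,v]) = Σ_l (v_l - u_l) ∫_0^1 A_l(u + s(v-u)) ds`. -/
def circA {d : ℕ} (A : Vd d → Vd d) (u v : Vd d) : ℝ :=
  ∑ l, (v l - u l) * ∫ s in (0:ℝ)..1, A (u + s • (v - u)) l

/-- `B̃^ε_{lj}(x,y,z) := (1/2)∫_{-1/2}^{1/2}dt ∫_0^1 ds s [B_{lj}(x+εs(ty-z/2)) + B_{lj}(x+εs(y/2+tz))]`. -/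
def Btil {d : ℕ} (ε : ℝ) (B : Vd d → Fin d → Fin d → ℝ) (x y z : Vd d)
    (l j : Fin d) : ℝ :=
  (2:ℝ)⁻¹ * ∫ t in (-(2:ℝ)⁻¹)..(2:ℝ)⁻¹, ∫ s in (0:ℝ)..1,
    s * (B (x + (ε * s) • (t • y - (2:ℝ)⁻¹ • z)) l j
          + B (x + (ε * s) • ((2:ℝ)⁻¹ • y + t • z)) l j)

/-- The scaled magnetic flux `γ^B_ε(x,y,z) := ε Σ_{l,j} B̃^ε_{lj}(x,y,z) y_l z_j`. -/
def gammaB {d : ℕ} (ε : ℝ) (B : Vd d → Fin d → Fin d → ℝ) (x y z : Vd d) : ℝ :=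
  ε * ∑ l, ∑ j, Btil ε B x y z l j * y l * z j

/-- The transversal gauge vector potential centered at `x`:
`A^x_l(w) := -Σ_j ∫_0^1 B_{lj}(x + s(w-x)) s (w_j - x_j) ds`. -/
def transGauge {d : ℕ} (B : Vd d → Fin d → Fin d → ℝ) (x : Vd d) (w : Vd d) : Vd d :=
  fun l => -∑ j, ∫ s in (0:ℝ)..1, B (x + s • (w - x)) l j * s * (w j - x j)

/-! Write `ω_p(a, b) = Σ_{l,j} B_{lj}(p) a_l b_j`. Along the segment from `x + U` to `x + V`,
the transversal gauge turns the circulation into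
`-∫₀¹∫₀¹ s ω_{x+s(U+σ(V-U))}(V-U, U+σ(V-U)) ds dσ`.
On each side of the triangle `V - U` and `U` are explicit combinations of `y` and `z`, so by
antisymmetry the integrand is a multiple of `s ω(y, z)`, with coefficients `ε²/2`, `ε²/2`
and `0`. The substitution `σ = t + 1/2` identifies the first two double integrals with the two
halves of `B̃^ε`. -/

section Antisymmetric

variable {ι R : Type*} [Fintype ι] [CommRing R] {M : ι → ι → R}

theorem sum_sum_swap_of_antisymm (hM : ∀ l j, M l j = -M j l) (a b : ι → R) :
    ∑ l, ∑ j, M l j * b l * a j = -∑ l, ∑ j, M l j * a l * b j := by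
  rw [Finset.sum_comm, ← Finset.sum_neg_distrib]
  refine Finset.sum_congr rfl fun l _ => ?_
  rw [← Finset.sum_neg_distrib]
  refine Finset.sum_congr rfl fun j _ => ?_
  rw [hM]
  ring

theorem sum_sum_self_eq_zero_of_antisymm [IsAddTorsionFree R] (hM : ∀ l j, M l j = -M j l)
    (a : ι → R) : ∑ l, ∑ j, M l j * a l * a j = 0 :=
  self_eq_neg.mp (sum_sum_swap_of_antisymm hM a a)

theorem sum_sum_lincomb_of_antisymm [IsAddTorsionFree R] (hM : ∀ l j, M l j = -M j l)
    (y z : ι → R) (α β γ δ : R) :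
    ∑ l, ∑ j, M l j * (α * y l + β * z l) * (γ * y j + δ * z j)
      = (α * δ - β * γ) * ∑ l, ∑ j, M l j * y l * z j := by
  have expand : ∀ l j, M l j * (α * y l + β * z l) * (γ * y j + δ * z j)
      = α * γ * (M l j * y l * y j) + α * δ * (M l j * y l * z j)
        + β * γ * (M l j * z l * y j) + β * δ * (M l j * z l * z j) := fun l j => by ring
  simp only [expand, Finset.sum_add_distrib, ← Finset.mul_sum,
    sum_sum_self_eq_zero_of_antisymm hM, sum_sum_swap_of_antisymm hM y z]
  ring

end Antisymmetric

namespace intervalIntegral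

theorem integral_integral_finsetSum {ι E : Type*} [NormedAddCommGroup E] [NormedSpace ℝ E]
    (S : Finset ι) {f : ι → ℝ → ℝ → E}
    (hf : ∀ i ∈ S, Continuous (Function.uncurry (f i))) (a b c d : ℝ) :
    ∫ t in a..b, ∫ s in c..d, ∑ i ∈ S, f i t s
      = ∑ i ∈ S, ∫ t in a..b, ∫ s in c..d, f i t s := by
  rw [← integral_finsetSum fun i hi =>
    (continuous_parametric_intervalIntegral_of_continuous' (hf i hi) c d).intervalIntegrable a b]
  refine integral_congr fun t _ => integral_finsetSum fun i hi => ?_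
  exact ((hf i hi).comp (Continuous.prodMk_right t)).intervalIntegrable c d

theorem integral_integral_add {E : Type*} [NormedAddCommGroup E] [NormedSpace ℝ E]
    {f g : ℝ → ℝ → E} (hf : Continuous (Function.uncurry f))
    (hg : Continuous (Function.uncurry g)) (a b c d : ℝ) :
    ∫ t in a..b, ∫ s in c..d, f t s + g t s
      = (∫ t in a..b, ∫ s in c..d, f t s) + ∫ t in a..b, ∫ s in c..d, g t s := by
  simpa using integral_integral_finsetSum Finset.univ (f := ![f, g])
    (by simpa [Fin.forall_fin_two] using ⟨hf, hg⟩) a b c d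

end intervalIntegral

def twoForm {d : ℕ} (B : Vd d → Fin d → Fin d → ℝ) (p a b : Vd d) : ℝ :=
  ∑ l, ∑ j, B p l j * a l * b j

section Gauge

variable {d : ℕ} {B : Vd d → Fin d → Fin d → ℝ}

@[fun_prop]
theorem continuous_twoForm (hB : Continuous B) (a b : Vd d) :
    Continuous fun p => twoForm B p a b := by
  unfold twoForm
  fun_prop

theorem continuous_transGauge (hB : Continuous B) (x : Vd d) : Continuous (transGauge B x) :=
  continuous_pi fun l => (continuous_finsetSum _ fun j _ =>
    intervalIntegral.continuous_parametric_intervalIntegral_of_continuous' (by fun_prop) 0 1).neg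

theorem circA_eq_integral {A : Vd d → Vd d} (hA : Continuous A) (u v : Vd d) :
    circA A u v = ∫ σ in (0:ℝ)..1, ∑ l, (v - u) l * A (u + σ • (v - u)) l := by
  rw [intervalIntegral.integral_finsetSum fun l _ =>
    (by fun_prop : Continuous _).intervalIntegrable 0 1]
  simp only [circA, intervalIntegral.integral_const_mul, Pi.sub_apply]

theorem sum_mul_transGauge (hB : Continuous B) (x w a : Vd d) :
    ∑ l, a l * transGauge B x w l
      = -∫ s in (0:ℝ)..1, s * twoForm B (x + s • (w - x)) a (w - x) := by
  have hcont : ∀ l j,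
      Continuous fun s : ℝ => s * (B (x + s • (w - x)) l j * a l * (w j - x j)) :=
    fun l j => by fun_prop
  simp only [transGauge, twoForm, mul_neg, Finset.sum_neg_distrib, Finset.mul_sum,
    ← intervalIntegral.integral_const_mul, neg_inj, Pi.sub_apply]
  rw [intervalIntegral.integral_finsetSum fun l _ =>
    (continuous_finsetSum _ fun j _ => hcont l j).intervalIntegrable 0 1]
  refine Finset.sum_congr rfl fun l _ => ?_
  rw [intervalIntegral.integral_finsetSum fun j _ => (hcont l j).intervalIntegrable 0 1]
  refine Finset.sum_congr rfl fun j _ => intervalIntegral.integral_congr fun s _ => ?_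
  ring

def segmentFlux (B : Vd d → Fin d → Fin d → ℝ) (x y z : Vd d) (α β γ δ : ℝ) : ℝ :=
  ∫ σ in (0:ℝ)..1, ∫ s in (0:ℝ)..1,
    s * twoForm B (x + s • ((γ + σ * α) • y + (δ + σ * β) • z)) y z

theorem circA_transGauge (hB : Continuous B) (hanti : ∀ p l j, B p l j = -B p j l)
    (x y z u v : Vd d) (α β γ δ : ℝ) (hu : u = x + (γ • y + δ • z))
    (hvu : v - u = α • y + β • z) :
    circA (transGauge B x) u v = (β * γ - α * δ) * segmentFlux B x y z α β γ δ := by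
  rw [circA_eq_integral (continuous_transGauge hB x), segmentFlux,
    ← intervalIntegral.integral_const_mul]
  refine intervalIntegral.integral_congr fun σ _ => ?_
  have hw : u + σ • (v - u) - x = (γ + σ * α) • y + (δ + σ * β) • z := by
    rw [hvu, hu]; module
  rw [sum_mul_transGauge hB, hw, hvu, ← intervalIntegral.integral_const_mul,
    ← intervalIntegral.integral_neg]
  refine intervalIntegral.integral_congr fun s _ => ?_
  simp only [twoForm, Pi.add_apply, Pi.smul_apply, smul_eq_mul,
    sum_sum_lincomb_of_antisymm (hanti _)]
  ring

theorem segmentFlux_eq_integral_centered (x y z : Vd d) (α β γ δ : ℝ) :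
    segmentFlux B x y z α β γ δ = ∫ t in -(2:ℝ)⁻¹..2⁻¹, ∫ s in (0:ℝ)..1,
      s * twoForm B (x + s • ((γ + (t + 2⁻¹) * α) • y + (δ + (t + 2⁻¹) * β) • z)) y z := by
  rw [intervalIntegral.integral_comp_add_right (fun σ => ∫ s in (0:ℝ)..1,
    s * twoForm B (x + s • ((γ + σ * α) • y + (δ + σ * β) • z)) y z)]
  norm_num [segmentFlux]

theorem sum_sum_Btil_mul_mul_eq_integral (hB : Continuous B) (ε : ℝ) (x y z : Vd d) :
    ∑ l, ∑ j, Btil ε B x y z l j * y l * z j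
      = 2⁻¹ * ∫ t in -(2:ℝ)⁻¹..2⁻¹, ∫ s in (0:ℝ)..1,
          (s * twoForm B (x + (ε * s) • (t • y - (2:ℝ)⁻¹ • z)) y z
            + s * twoForm B (x + (ε * s) • ((2:ℝ)⁻¹ • y + t • z)) y z) := by
  set g : Fin d → Fin d → ℝ → ℝ → ℝ := fun l j t s => 2⁻¹ * y l * z j *
    (s * (B (x + (ε * s) • (t • y - (2:ℝ)⁻¹ • z)) l j
      + B (x + (ε * s) • ((2:ℝ)⁻¹ • y + t • z)) l j)) with hg
  have hcont : ∀ l j, Continuous (Function.uncurry (g l j)) := fun l j => by fun_prop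
  have hterm : ∀ l j, Btil ε B x y z l j * y l * z j
      = ∫ t in -(2:ℝ)⁻¹..2⁻¹, ∫ s in (0:ℝ)..1, g l j t s := by
    intro l j
    simp only [hg, Btil, intervalIntegral.integral_const_mul]
    ring
  simp only [hterm]
  rw [Finset.sum_congr rfl fun l _ =>
      (intervalIntegral.integral_integral_finsetSum _ (fun j _ => hcont l j) _ _ _ _).symm,
    ← intervalIntegral.integral_integral_finsetSum _ (fun l _ => by fun_prop),
    ← intervalIntegral.integral_const_mul]
  refine intervalIntegral.integral_congr fun t _ => ?_
  rw [← intervalIntegral.integral_const_mul]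
  refine intervalIntegral.integral_congr fun s _ => ?_
  simp only [hg, twoForm, Finset.mul_sum, ← Finset.sum_add_distrib]
  exact Finset.sum_congr rfl fun l _ => Finset.sum_congr rfl fun j _ => by ring

theorem sum_sum_Btil_mul_mul (hB : Continuous B) (ε : ℝ) (x y z : Vd d) :
    ∑ l, ∑ j, Btil ε B x y z l j * y l * z j
      = 2⁻¹ * (segmentFlux B x y z ε 0 (-(ε / 2)) (-(ε / 2))
          + segmentFlux B x y z 0 ε (ε / 2) (-(ε / 2))) := by
  rw [sum_sum_Btil_mul_mul_eq_integral hB,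
    intervalIntegral.integral_integral_add (by fun_prop) (by fun_prop),
    segmentFlux_eq_integral_centered, segmentFlux_eq_integral_centered]
  congr 2 <;> refine intervalIntegral.integral_congr fun t _ =>
    intervalIntegral.integral_congr fun s _ => congrArg (fun p => s * twoForm B p y z) ?_ <;>
    module

end Gauge

theorem statement10_general (d : ℕ)
    (B : Vd d → Fin d → Fin d → ℝ)
    (hBcont : ∀ l j, Continuous fun w => B w l j)
    (hBanti : ∀ (w : Vd d) (l j : Fin d), B w l j = -B w j l)
    (x : Vd d) (ε : ℝ) (hε : ε ≠ 0) :
    ∀ y z : Vd d,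
      ε⁻¹ * (circA (transGauge B x) (x - (ε / 2) • (y + z)) (x + (ε / 2) • (y - z))
              + circA (transGauge B x) (x + (ε / 2) • (y - z)) (x + (ε / 2) • (y + z))
              + circA (transGauge B x) (x + (ε / 2) • (y + z)) (x - (ε / 2) • (y + z)))
        = ε * ∑ l, ∑ j, Btil ε B x y z l j * y l * z j ∧
      ε⁻¹ * (circA (transGauge B x) (x - (ε / 2) • (y + z)) (x + (ε / 2) • (y - z))
              + circA (transGauge B x) (x + (ε / 2) • (y - z)) (x + (ε / 2) • (y + z))
              + circA (transGauge B x) (x + (ε / 2) • (y + z)) (x - (ε / 2) • (y + z)))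
        = gammaB ε B x y z := by
  intro y z
  have hB : Continuous B := continuous_pi fun l => continuous_pi fun j => hBcont l j
  simp only [gammaB, and_self]
  rw [circA_transGauge hB hBanti x y z (x - (ε / 2) • (y + z)) (x + (ε / 2) • (y - z))
      ε 0 (-(ε / 2)) (-(ε / 2)) (by module) (by module),
    circA_transGauge hB hBanti x y z (x + (ε / 2) • (y - z)) (x + (ε / 2) • (y + z))
      0 ε (ε / 2) (-(ε / 2)) (by module) (by module),
    circA_transGauge hB hBanti x y z (x + (ε / 2) • (y + z)) (x - (ε / 2) • (y + z))
      (-ε) (-ε) (ε / 2) (ε / 2) (by module) (by module),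
    sum_sum_Btil_mul_mul hB]
  field_simp
  ring

/-- The scaled magnetic flux through the triangle with corners
`a = x - (ε/2)(y+z)`, `b = x + (ε/2)(y-z)`, `c = x + (ε/2)(y+z)` computed via the
transversal gauge equals `ε Σ_{l,j} B̃^ε_{lj}(x,y,z) y_l z_j = γ^B_ε(x,y,z)`. -/
theorem statement10 (d : ℕ) (hd : 1 ≤ d)
    (B : Vd d → Fin d → Fin d → ℝ)
    (hBcont : ∀ l j, Continuous fun w => B w l j)
    (hBanti : ∀ (w : Vd d) (l j : Fin d), B w l j = -B w j l)
    (x : Vd d) (ε : ℝ) (hε : ε ≠ 0) :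
    ∀ y z : Vd d,
      ε⁻¹ * (circA (transGauge B x) (x - (ε / 2) • (y + z)) (x + (ε / 2) • (y - z))
              + circA (transGauge B x) (x + (ε / 2) • (y - z)) (x + (ε / 2) • (y + z))
              + circA (transGauge B x) (x + (ε / 2) • (y + z)) (x - (ε / 2) • (y + z)))
        = ε * ∑ l, ∑ j, Btil ε B x y z l j * y l * z j ∧
      ε⁻¹ * (circA (transGauge B x) (x - (ε / 2) • (y + z)) (x + (ε / 2) • (y - z))
              + circA (transGauge B x) (x + (ε / 2) • (y - z)) (x + (ε / 2) • (y + z))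
              + circA (transGauge B x) (x + (ε / 2) • (y + z)) (x - (ε / 2) • (y + z)))
        = gammaB ε B x y z :=
  statement10_general d B hBcont hBanti x ε hε
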